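/- arXiv:0903.2782 — 2 statements merged into one kernel-verified Lean document; each statement's English description precedes it below -/
import Mathlib

section
/- Let E : ℝ → ℝ be differentiable, δ > 0, η > 0, ρ ∈ (0, 1/2], and suppose: (i) on each interval I_j = [s+jη, s+(j+1)η], j ∈ ℕ, there is a differentiable function E_j with (1−ρ)E_j(t) ≤ E(t) ≤ (1+ρ)E_j(t) and E_j(t) ≥ 0, and (ii) E_j'(t) + δE_j(t) ≤ 0 for t ∈ I_j. If moreover ((1+ρ)/(1−ρ))e^{−δη/2} ≤ 1, then E(t) ≤ ((1+ρ)/(1−ρ)) e^{−(δ/2)(t−s)} E(s) for all t ≥ s. -/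
/-!
On each interval the functional `Eⱼ` decays like `e^{-δ(t - tⱼ)}` by Grönwall, and comparability
transfers this to `E` at the price of the factor `C = (1 + ρ)/(1 - ρ)`. Across one full interval
the factor is absorbed by half of the decay, since `C e^{-δη} ≤ e^{-δη/2}`; iterating, the nodes
`s + nη` decay at rate `δ/2` without any constant, and the constant `C` enters only once, on the
last (partial) interval.
-/

open Real Set

lemma le_mul_exp_of_deriv_add_mul_nonpos {f : ℝ → ℝ} (hf : Differentiable ℝ f) {δ a b : ℝ}
    (hdecay : ∀ t ∈ Ico a b, deriv f t + δ * f t ≤ 0) :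
    ∀ t ∈ Icc a b, f t ≤ f a * exp (-δ * (t - a)) := by
  intro t ht
  have := le_gronwallBound_of_liminf_deriv_right_le (f' := deriv f) (K := -δ) (ε := 0)
    hf.continuous.continuousOn
    (fun x _ _ hr => (hf x).hasDerivAt.hasDerivWithinAt.liminf_right_slope_le hr) le_rfl
    (fun x hx => by linarith [hdecay x hx]) t ht
  rwa [gronwallBound_ε0] at this

lemma le_div_mul_exp_of_comparable {E F : ℝ → ℝ} (hF : Differentiable ℝ F) {c C δ a b : ℝ}
    (hc : 0 < c) (hC : 0 ≤ C) (hcomp : ∀ t ∈ Icc a b, c * F t ≤ E t ∧ E t ≤ C * F t)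
    (hdecay : ∀ t ∈ Ico a b, deriv F t + δ * F t ≤ 0) :
    ∀ t ∈ Icc a b, E t ≤ C / c * exp (-δ * (t - a)) * E a := by
  intro t ht
  have ha : a ∈ Icc a b := ⟨le_rfl, ht.1.trans ht.2⟩
  have hFa : F a ≤ E a / c := (le_div_iff₀' hc).mpr (hcomp a ha).1
  calc E t ≤ C * F t := (hcomp t ht).2
    _ ≤ C * (F a * exp (-δ * (t - a))) :=
        mul_le_mul_of_nonneg_left (le_mul_exp_of_deriv_add_mul_nonpos hF hdecay t ht) hC
    _ ≤ C * (E a / c * exp (-δ * (t - a))) := by gcongr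
    _ = C / c * exp (-δ * (t - a)) * E a := by ring

lemma exists_nat_mem_Icc_add_mul {s η t : ℝ} (hη : 0 < η) (ht : s ≤ t) :
    ∃ n : ℕ, t ∈ Icc (s + n * η) (s + (n + 1) * η) := by
  refine ⟨⌊(t - s) / η⌋₊, ?_, ?_⟩
  · have := Nat.floor_le (div_nonneg (sub_nonneg.mpr ht) hη.le)
    rw [le_div_iff₀ hη] at this
    linarith
  · have := (Nat.lt_floor_add_one ((t - s) / η)).le
    rw [div_le_iff₀ hη] at this
    linarith

section Iteration

variable {E : ℝ → ℝ} {C δ η s : ℝ}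

lemma apply_add_nat_mul_le_of_forall_Icc (hη : 0 ≤ η) (hnode : ∀ j : ℕ, 0 ≤ E (s + j * η))
    (hloc : ∀ j : ℕ, ∀ t ∈ Icc (s + j * η) (s + (j + 1) * η),
      E t ≤ C * exp (-δ * (t - (s + j * η))) * E (s + j * η))
    (hfac : C * exp (-δ * η / 2) ≤ 1) (n : ℕ) :
    E (s + n * η) ≤ exp (-(δ / 2) * (n * η)) * E s := by
  have hstep : ∀ k : ℕ, E (s + (k + 1) * η) ≤ exp (-δ * η / 2) * E (s + k * η) := by
    intro k
    have hend : s + (k + 1) * η ∈ Icc (s + k * η) (s + (k + 1) * η) :=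
      ⟨by linarith, le_rfl⟩
    have hhalf : exp (-δ * η) = exp (-δ * η / 2) * exp (-δ * η / 2) := by
      rw [← exp_add]; ring_nf
    calc E (s + (k + 1) * η) ≤ C * exp (-δ * η) * E (s + k * η) := by
          convert hloc k _ hend using 4; ring
      _ = C * exp (-δ * η / 2) * exp (-δ * η / 2) * E (s + k * η) := by rw [hhalf]; ring
      _ ≤ 1 * exp (-δ * η / 2) * E (s + k * η) := by gcongr; exact hnode k
      _ = exp (-δ * η / 2) * E (s + k * η) := by rw [one_mul]
  have := le_geom (u := fun k : ℕ => E (s + k * η)) (exp_pos _).le n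
    (fun k _ => by simpa using hstep k)
  simp only [Nat.cast_zero, zero_mul, add_zero, ← exp_nat_mul] at this
  convert this using 3; ring

lemma le_mul_exp_of_forall_Icc (hC : 0 ≤ C) (hδ : 0 ≤ δ) (hη : 0 < η)
    (hnode : ∀ j : ℕ, 0 ≤ E (s + j * η))
    (hloc : ∀ j : ℕ, ∀ t ∈ Icc (s + j * η) (s + (j + 1) * η),
      E t ≤ C * exp (-δ * (t - (s + j * η))) * E (s + j * η))
    (hfac : C * exp (-δ * η / 2) ≤ 1) :
    ∀ t ≥ s, E t ≤ C * exp (-(δ / 2) * (t - s)) * E s := by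
  intro t ht
  obtain ⟨n, hn⟩ := exists_nat_mem_Icc_add_mul hη ht
  have hslow : exp (-δ * (t - (s + n * η))) ≤ exp (-(δ / 2) * (t - (s + n * η))) :=
    exp_le_exp.mpr (by nlinarith [hn.1])
  calc E t ≤ C * exp (-δ * (t - (s + n * η))) * E (s + n * η) := hloc n t hn
    _ ≤ C * exp (-(δ / 2) * (t - (s + n * η))) * (exp (-(δ / 2) * (n * η)) * E s) := by
        gcongr
        · exact hnode n
        · exact apply_add_nat_mul_le_of_forall_Icc hη.le hnode hloc hfac n
    _ = C * exp (-(δ / 2) * (t - s)) * E s := by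
        rw [mul_assoc, ← mul_assoc (exp _), ← exp_add]; ring_nf

end Iteration

theorem stmt_7_general (E : ℝ → ℝ)
    (δ η : ℝ) (hδ : 0 < δ) (hη : 0 < η)
    (ρ : ℝ) (hρ0 : 0 < ρ) (hρ : ρ ≤ 1 / 2) (s : ℝ)
    (Ej : ℕ → ℝ → ℝ) (hEjdiff : ∀ j : ℕ, Differentiable ℝ (Ej j))
    (hcomp : ∀ j : ℕ, ∀ t ∈ Set.Icc (s + j * η) (s + (j + 1) * η),
      (1 - ρ) * Ej j t ≤ E t ∧ E t ≤ (1 + ρ) * Ej j t ∧ 0 ≤ Ej j t)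
    (hdecay : ∀ j : ℕ, ∀ t ∈ Set.Icc (s + j * η) (s + (j + 1) * η),
      deriv (Ej j) t + δ * Ej j t ≤ 0)
    (hfac : ((1 + ρ) / (1 - ρ)) * Real.exp (-δ * η / 2) ≤ 1) :
    ∀ t ≥ s, E t ≤ ((1 + ρ) / (1 - ρ)) * Real.exp (-(δ / 2) * (t - s)) * E s := by
  have hρ1 : 0 < 1 - ρ := by linarith
  have hnode (j : ℕ) : 0 ≤ E (s + j * η) := by
    obtain ⟨hlow, -, hnonneg⟩ := hcomp j _ ⟨le_rfl, by nlinarith⟩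
    nlinarith
  refine le_mul_exp_of_forall_Icc (by positivity) hδ.le hη hnode (fun j => ?_) hfac
  exact le_div_mul_exp_of_comparable (hEjdiff j) hρ1 (by linarith)
    (fun t ht => ⟨(hcomp j t ht).1, (hcomp j t ht).2.1⟩)
    (fun t ht => hdecay j t (Ico_subset_Icc_self ht))

/-- Iteration of piecewise exponential decay of comparable energy functionals
yields global exponential decay with halved rate. -/
theorem stmt_7 (E : ℝ → ℝ) (hE : Differentiable ℝ E)
    (δ η : ℝ) (hδ : 0 < δ) (hη : 0 < η)
    (ρ : ℝ) (hρ0 : 0 < ρ) (hρ : ρ ≤ 1 / 2) (s : ℝ)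
    (Ej : ℕ → ℝ → ℝ) (hEjdiff : ∀ j : ℕ, Differentiable ℝ (Ej j))
    (hcomp : ∀ j : ℕ, ∀ t ∈ Set.Icc (s + j * η) (s + (j + 1) * η),
      (1 - ρ) * Ej j t ≤ E t ∧ E t ≤ (1 + ρ) * Ej j t ∧ 0 ≤ Ej j t)
    (hdecay : ∀ j : ℕ, ∀ t ∈ Set.Icc (s + j * η) (s + (j + 1) * η),
      deriv (Ej j) t + δ * Ej j t ≤ 0)
    (hfac : ((1 + ρ) / (1 - ρ)) * Real.exp (-δ * η / 2) ≤ 1) :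
    ∀ t ≥ s, E t ≤ ((1 + ρ) / (1 - ρ)) * Real.exp (-(δ / 2) * (t - s)) * E s :=
  stmt_7_general E δ η hδ hη ρ hρ0 hρ s Ej hEjdiff hcomp hdecay hfac
end

section
/- Let δ, λ₁ > 0 with δ ≤ min{1/2, λ₁/2}, let ε ∈ (0,1], and let H, V be Hilbert spaces with V ⊆ H and ‖v‖²_V ≥ (λ₁+θ)‖v‖²_H for θ ≥ 0. For (v,w) ∈ V × H define E(v,w) := (ε/2)‖δv+w‖²_H + (1/2)‖v‖²_V + (1/2)(εδ²−δ)‖v‖²_H, and let ‖(v,w)‖² := ‖v‖²_V + ε‖w‖²_H. Then (1/4)‖(v,w)‖² ≤ E(v,w) ≤ (3/4)‖(v,w)‖² for all (v,w) ∈ V × H. -/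
/-!
Write `u = ι v`. Completing the square in the cross term `εδ⟪u, w⟫` gives the two identities

  `E - ¼(‖v‖² + ε‖w‖²) = ε‖δu + ½w‖² + ¼(‖v‖² - 2δ‖u‖²)`,
  `¾(‖v‖² + ε‖w‖²) - E = ε‖δu - ½w‖² + ¼(‖v‖² - 2δ‖u‖²) + δ(1 - 2εδ)‖u‖²`,

and every term on the right is nonnegative, because `2δ ≤ λ₁` makes `‖v‖² ≥ 2δ‖u‖²`
and `ε ≤ 1`, `δ ≤ ½` make `2εδ ≤ 1`.
-/

section ShiftedEnergy

variable {V H : Type*} [Norm V] [NormedAddCommGroup H] [InnerProductSpace ℝ H]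

noncomputable def shiftedEnergy (ι : V → H) (ε δ : ℝ) (v : V) (w : H) : ℝ :=
  (ε / 2) * ‖δ • ι v + w‖ ^ 2 + (1 / 2) * ‖v‖ ^ 2 + (1 / 2) * (ε * δ ^ 2 - δ) * ‖ι v‖ ^ 2

lemma norm_smul_add_half_smul_sq (δ : ℝ) (u w : H) :
    ‖δ • u + (1 / 2 : ℝ) • w‖ ^ 2 = δ ^ 2 * ‖u‖ ^ 2 + δ * inner ℝ u w + ‖w‖ ^ 2 / 4 := by
  rw [norm_add_sq_real, norm_smul, norm_smul, real_inner_smul_left, real_inner_smul_right,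
    Real.norm_eq_abs, Real.norm_eq_abs, mul_pow, mul_pow, sq_abs, sq_abs]
  ring

lemma norm_smul_sub_half_smul_sq (δ : ℝ) (u w : H) :
    ‖δ • u - (1 / 2 : ℝ) • w‖ ^ 2 = δ ^ 2 * ‖u‖ ^ 2 - δ * inner ℝ u w + ‖w‖ ^ 2 / 4 := by
  rw [norm_sub_sq_real, norm_smul, norm_smul, real_inner_smul_left, real_inner_smul_right,
    Real.norm_eq_abs, Real.norm_eq_abs, mul_pow, mul_pow, sq_abs, sq_abs]
  ring

lemma shiftedEnergy_eq (ι : V → H) (ε δ : ℝ) (v : V) (w : H) :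
    shiftedEnergy ι ε δ v w = ε * δ ^ 2 * ‖ι v‖ ^ 2 + ε * δ * inner ℝ (ι v) w
      + ε / 2 * ‖w‖ ^ 2 + ‖v‖ ^ 2 / 2 - δ / 2 * ‖ι v‖ ^ 2 := by
  rw [shiftedEnergy, norm_add_sq_real, norm_smul, real_inner_smul_left, Real.norm_eq_abs,
    mul_pow, sq_abs]
  ring

lemma shiftedEnergy_sub_quarter (ι : V → H) (ε δ : ℝ) (v : V) (w : H) :
    shiftedEnergy ι ε δ v w - (1 / 4) * (‖v‖ ^ 2 + ε * ‖w‖ ^ 2) =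
      ε * ‖δ • ι v + (1 / 2 : ℝ) • w‖ ^ 2 + (‖v‖ ^ 2 - 2 * δ * ‖ι v‖ ^ 2) / 4 := by
  rw [shiftedEnergy_eq, norm_smul_add_half_smul_sq]
  ring

lemma three_quarters_sub_shiftedEnergy (ι : V → H) (ε δ : ℝ) (v : V) (w : H) :
    (3 / 4) * (‖v‖ ^ 2 + ε * ‖w‖ ^ 2) - shiftedEnergy ι ε δ v w =
      ε * ‖δ • ι v - (1 / 2 : ℝ) • w‖ ^ 2 + (‖v‖ ^ 2 - 2 * δ * ‖ι v‖ ^ 2) / 4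
        + δ * (1 - 2 * ε * δ) * ‖ι v‖ ^ 2 := by
  rw [shiftedEnergy_eq, norm_smul_sub_half_smul_sq]
  ring

variable {ι : V → H} {ε δ : ℝ} {v : V}

lemma quarter_le_shiftedEnergy (hε : 0 ≤ ε) (hv : 2 * δ * ‖ι v‖ ^ 2 ≤ ‖v‖ ^ 2) (w : H) :
    (1 / 4) * (‖v‖ ^ 2 + ε * ‖w‖ ^ 2) ≤ shiftedEnergy ι ε δ v w := by
  have h := shiftedEnergy_sub_quarter ι ε δ v w
  have : 0 ≤ ε * ‖δ • ι v + (1 / 2 : ℝ) • w‖ ^ 2 := by positivity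
  linarith

lemma shiftedEnergy_le_three_quarters (hε : 0 ≤ ε) (hδ : 0 ≤ δ) (hεδ : 2 * ε * δ ≤ 1)
    (hv : 2 * δ * ‖ι v‖ ^ 2 ≤ ‖v‖ ^ 2) (w : H) :
    shiftedEnergy ι ε δ v w ≤ (3 / 4) * (‖v‖ ^ 2 + ε * ‖w‖ ^ 2) := by
  have h := three_quarters_sub_shiftedEnergy ι ε δ v w
  have h₁ : 0 ≤ ε * ‖δ • ι v - (1 / 2 : ℝ) • w‖ ^ 2 := by positivity
  have h₂ : 0 ≤ δ * (1 - 2 * ε * δ) * ‖ι v‖ ^ 2 :=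
    mul_nonneg (mul_nonneg hδ (sub_nonneg.mpr hεδ)) (sq_nonneg _)
  linarith

end ShiftedEnergy

theorem stmt_8_general {V H : Type*} [NormedAddCommGroup V] [InnerProductSpace ℝ V]
    [NormedAddCommGroup H] [InnerProductSpace ℝ H]
    (ι : V →ₗ[ℝ] H)  -- the inclusion V ⊆ H
    (δ lam1 θ ε : ℝ) (hδ0 : 0 < δ)
    (hδ : δ ≤ min (1 / 2) (lam1 / 2)) (hε0 : 0 < ε) (hε1 : ε ≤ 1) (hθ : 0 ≤ θ)
    (hVH : ∀ v : V, (lam1 + θ) * ‖ι v‖ ^ 2 ≤ ‖v‖ ^ 2) :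
    ∀ (v : V) (w : H),
      (1 / 4) * (‖v‖ ^ 2 + ε * ‖w‖ ^ 2) ≤
        (ε / 2) * ‖δ • ι v + w‖ ^ 2 + (1 / 2) * ‖v‖ ^ 2 +
          (1 / 2) * (ε * δ ^ 2 - δ) * ‖ι v‖ ^ 2 ∧
      (ε / 2) * ‖δ • ι v + w‖ ^ 2 + (1 / 2) * ‖v‖ ^ 2 +
          (1 / 2) * (ε * δ ^ 2 - δ) * ‖ι v‖ ^ 2 ≤
        (3 / 4) * (‖v‖ ^ 2 + ε * ‖w‖ ^ 2) := by
  intro v w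
  have hδ_half : δ ≤ 1 / 2 := hδ.trans (min_le_left _ _)
  have hδ_lam : 2 * δ ≤ lam1 := by linarith [hδ.trans (min_le_right _ _)]
  have hεδ : 2 * ε * δ ≤ 1 := by nlinarith
  have hv : 2 * δ * ‖ι v‖ ^ 2 ≤ ‖v‖ ^ 2 :=
    calc 2 * δ * ‖ι v‖ ^ 2 ≤ (lam1 + θ) * ‖ι v‖ ^ 2 := by gcongr; linarith
      _ ≤ ‖v‖ ^ 2 := hVH v
  exact ⟨quarter_le_shiftedEnergy hε0.le hv w,
    shiftedEnergy_le_three_quarters hε0.le hδ0.le hεδ hv w⟩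

/-- Equivalence of the shifted energy functional with the natural ε-weighted norm
on `Z₀ = V × H`. -/
theorem stmt_8 {V H : Type*} [NormedAddCommGroup V] [InnerProductSpace ℝ V] [CompleteSpace V]
    [NormedAddCommGroup H] [InnerProductSpace ℝ H] [CompleteSpace H]
    (ι : V →ₗ[ℝ] H)  -- the inclusion V ⊆ H
    (δ lam1 θ ε : ℝ) (hlam : 0 < lam1) (hδ0 : 0 < δ)
    (hδ : δ ≤ min (1 / 2) (lam1 / 2)) (hε0 : 0 < ε) (hε1 : ε ≤ 1) (hθ : 0 ≤ θ)
    (hVH : ∀ v : V, (lam1 + θ) * ‖ι v‖ ^ 2 ≤ ‖v‖ ^ 2) :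
    ∀ (v : V) (w : H),
      (1 / 4) * (‖v‖ ^ 2 + ε * ‖w‖ ^ 2) ≤
        (ε / 2) * ‖δ • ι v + w‖ ^ 2 + (1 / 2) * ‖v‖ ^ 2 +
          (1 / 2) * (ε * δ ^ 2 - δ) * ‖ι v‖ ^ 2 ∧
      (ε / 2) * ‖δ • ι v + w‖ ^ 2 + (1 / 2) * ‖v‖ ^ 2 +
          (1 / 2) * (ε * δ ^ 2 - δ) * ‖ι v‖ ^ 2 ≤
        (3 / 4) * (‖v‖ ^ 2 + ε * ‖w‖ ^ 2) :=
  stmt_8_general ι δ lam1 θ ε hδ0 hδ hε0 hε1 hθ hVH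
end
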